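/- arXiv:1207.0578 — 2 statements merged into one kernel-verified Lean document; each statement's English description precedes it below -/
import Mathlib

section
/- Let x = (x_1,…,x_n) be a permutation of a set V of n planar points, no three collinear, such that the tour C(x) contains two intersecting edges. Then there exist indices 1 ≤ i < j ≤ n such that the edges {x_{i−1},x_i} and {x_j,x_{j+1}} of C(x) intersect, the inversion y = inv_{i,j}[x] satisfies C(x) \ C(y) = {{x_{i−1},x_i},{x_j,x_{j+1}}} and C(y) \ C(x) = {{x_{i−1},x_j},{x_i,x_{j+1}}}, and the two newly introduced edges {x_{i−1},x_j} and {x_i,x_{j+1}} do not intersect each other. -/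
noncomputable section
open Real EuclideanGeometry MeasureTheory
open scoped Classical ENNReal

/-- The Euclidean plane. -/
abbrev Plane := EuclideanSpace ℝ (Fin 2)

/-- Cyclic successor of an index (0-indexed version of `i + 1` modulo `n`). -/
def nxt {n : ℕ} (i : Fin n) : Fin n :=
  ⟨(i.1 + 1) % n, Nat.mod_lt _ (Nat.lt_of_le_of_lt (Nat.zero_le _) i.2)⟩

/-- Cyclic predecessor of an index (0-indexed version of `i - 1` modulo `n`). -/
def prv {n : ℕ} (i : Fin n) : Fin n :=
  ⟨(i.1 + (n - 1)) % n, Nat.mod_lt _ (Nat.lt_of_le_of_lt (Nat.zero_le _) i.2)⟩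

/-- Two closed segments `[a,b]` and `[c,d]` intersect: they have a common point
interior to both segments. -/
def segsCross (a b c d : Plane) : Prop :=
  ∃ p : Plane, p ∈ openSegment ℝ a b ∧ p ∈ openSegment ℝ c d

/-- No three (distinct) points of `V` are collinear. -/
def noThreeCollinear (V : Set Plane) : Prop :=
  ∀ u ∈ V, ∀ v ∈ V, ∀ w ∈ V, u ≠ v → u ≠ w → v ≠ w →
    ¬ Collinear ℝ ({u, v, w} : Set Plane)

/-- The set of (undirected) edges of the Hamiltonian cycle `C(x)` induced by the
permutation `x`. -/
def tourEdges {n : ℕ} (x : Fin n → Plane) : Set (Sym2 Plane) :=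
  {e | ∃ i : Fin n, e = s(x i, x (nxt i))}

/-- The tour `C(x)` is intersection-free: no two of its edges intersect. -/
def intersectionFree {n : ℕ} (x : Fin n → Plane) : Prop :=
  ∀ i j : Fin n, s(x i, x (nxt i)) ≠ s(x j, x (nxt j)) →
    ¬ segsCross (x i) (x (nxt i)) (x j) (x (nxt j))

/-- The inversion (2-opt) operation: reverse the subsequence between positions
`min i j` and `max i j`. -/
def invop {α : Type*} {n : ℕ} (i j : Fin n) (x : Fin n → α) : Fin n → α :=
  fun p =>
    if h : (min i j).1 ≤ p.1 ∧ p.1 ≤ (max i j).1 then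
      x ⟨(min i j).1 + (max i j).1 - p.1, by
        obtain ⟨h1, h2⟩ := h
        have := (max i j).2
        omega⟩
    else x p

/-- The jump operation: move the element in position `i` into position `j`,
shifting the intermediate elements accordingly. -/
def jmp {α : Type*} {n : ℕ} (i j : Fin n) (x : Fin n → α) : Fin n → α :=
  fun p =>
    if i ≤ j then
      if p < i then x p
      else if h : p.1 < j.1 then x ⟨p.1 + 1, by have := j.2; omega⟩
      else if p = j then x i
      else x p
    else
      if p < j then x p
      else if p = j then x i
      else if h : p.1 ≤ i.1 then x ⟨p.1 - 1, by have := p.2; omega⟩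
      else x p

/-- The fitness of a permutation: the total Euclidean length of the tour `C(x)`. -/
def fitness {n : ℕ} (x : Fin n → Plane) : ℝ :=
  ∑ i : Fin n, dist (x i) (x (nxt i))

/-- `x` is a permutation (an enumeration without repetitions) of the point set `V`. -/
def isPermOf {n : ℕ} (x : Fin n → Plane) (V : Set Plane) : Prop :=
  Function.Injective x ∧ Set.range x = V

/-- `x` is an optimal permutation of `V`: it minimizes the fitness among all
permutations of `V`. -/
def IsOptimalPerm {n : ℕ} (V : Set Plane) (x : Fin n → Plane) : Prop :=
  isPermOf x V ∧ ∀ y : Fin n → Plane, isPermOf y V → fitness x ≤ fitness y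

/-- `hull(V)`: the set of points of `V` that are vertices of the convex hull of `V`. -/
def hullVertices (V : Set Plane) : Set Plane :=
  {v | v ∈ V ∧ v ∉ convexHull ℝ (V \ {v})}

/-- `V` is angle-bounded by `ε`: every angle formed by three distinct points of `V`
lies strictly between `ε` and `π - ε`. -/
def angleBounded (ε : ℝ) (V : Set Plane) : Prop :=
  ∀ u ∈ V, ∀ v ∈ V, ∀ w ∈ V, u ≠ v → u ≠ w → v ≠ w →
    ε < ∠ u v w ∧ ∠ u v w < Real.pi - ε

/-- The set of pairwise distances between distinct points of `V`. -/
def pairDists (V : Set Plane) : Set ℝ :=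
  {d | ∃ u ∈ V, ∃ v ∈ V, u ≠ v ∧ d = dist u v}

/-- `γ(ε) = (d_max/d_min - 1) · cos ε / (1 - cos ε)`. -/
def gammaF (ε dmax dmin : ℝ) : ℝ :=
  (dmax / dmin - 1) * (Real.cos ε / (1 - Real.cos ε))

/-! Take crossing edges `{x_a, x_{a+1}}` and `{x_b, x_{b+1}}` with `a < b`. Crossing edges
cannot share an endpoint, since the three points involved would be collinear; so `i = a + 1 < j = b`
and the two edges are not consecutive around the cycle either. Reversing `x_i, …, x_j` then only
replaces these two edges by `{x_a, x_b}` and `{x_{a+1}, x_{b+1}}`: every other edge of the new tour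
is an edge of the old one traversed backwards. The new edges cannot cross: if both pairs of
opposite sides of the quadrilateral `x_a x_{a+1} x_{b+1} x_b` crossed, adding up triangle
inequalities would put the first crossing point on the segment `[x_a, x_b]`, making
`x_a, x_{a+1}, x_b` collinear. -/

section OpenSegment

variable {E : Type*} [AddCommGroup E] [Module ℝ E]

theorem wbtw_of_mem_openSegment {P Q p : E} (h : p ∈ openSegment ℝ P Q) : Wbtw ℝ P p Q :=
  mem_segment_iff_wbtw.mp (openSegment_subset_segment ℝ P Q h)

theorem collinear_of_mem_openSegment_of_mem_openSegment {P Q S p : E}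
    (h₁ : p ∈ openSegment ℝ P Q) (h₂ : p ∈ openSegment ℝ Q S) :
    Collinear ℝ ({P, Q, S} : Set E) := by
  by_cases hPQ : P = Q
  · subst hPQ
    simpa using collinear_pair ℝ P S
  have hQp : Q ≠ p := by
    rintro rfl
    exact hPQ (right_mem_openSegment_iff.mp h₁)
  have hP : P ∈ line[ℝ, Q, p] :=
    (wbtw_of_mem_openSegment h₁).collinear.mem_affineSpan_of_mem_of_ne
      (by simp) (by simp) (by simp) hQp
  have hS : S ∈ line[ℝ, Q, p] :=
    (wbtw_of_mem_openSegment h₂).collinear.mem_affineSpan_of_mem_of_ne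
      (by simp) (by simp) (by simp) hQp
  exact collinear_triple_of_mem_affineSpan_pair hP (left_mem_affineSpan_pair ℝ Q p) hS

end OpenSegment

theorem collinear_of_opposite_sides_meet {E : Type*} [NormedAddCommGroup E] [NormedSpace ℝ E]
    [StrictConvexSpace ℝ E] {P Q R S p q : E}
    (hpPQ : p ∈ openSegment ℝ P Q) (hpRS : p ∈ openSegment ℝ R S)
    (hqPR : q ∈ openSegment ℝ P R) (hqQS : q ∈ openSegment ℝ Q S) :
    Collinear ℝ ({P, Q, R} : Set E) := by
  by_cases hPQ : P = Q
  · subst hPQ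
    simpa using collinear_pair ℝ P R
  have hPp : P ≠ p := by
    rintro rfl
    exact hPQ (left_mem_openSegment_iff.mp hpPQ)
  have hPpR : Wbtw ℝ P p R := by
    refine dist_add_dist_eq_iff.mp (le_antisymm ?_ (dist_triangle P p R))
    -- |Pp| + |pQ| + |Rp| + |pS| = |PQ| + |RS| ≤ |PR| + |QS| ≤ |PR| + |Qp| + |pS|, the middle
    -- step by the triangle inequalities through `q`.
    have := (wbtw_of_mem_openSegment hpPQ).dist_add_dist
    have := (wbtw_of_mem_openSegment hpRS).dist_add_dist
    have := (wbtw_of_mem_openSegment hqPR).dist_add_dist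
    have := (wbtw_of_mem_openSegment hqQS).dist_add_dist
    have := dist_triangle P q Q
    have := dist_triangle R q S
    have := dist_triangle Q p S
    simp only [dist_comm] at *
    linarith
  have hQ : Q ∈ line[ℝ, P, p] :=
    (wbtw_of_mem_openSegment hpPQ).collinear.mem_affineSpan_of_mem_of_ne
      (by simp) (by simp) (by simp) hPp
  have hR : R ∈ line[ℝ, P, p] :=
    hPpR.collinear.mem_affineSpan_of_mem_of_ne (by simp) (by simp) (by simp) hPp
  exact collinear_triple_of_mem_affineSpan_pair (left_mem_affineSpan_pair ℝ P p) hQ hR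

section Cyclic

variable {n : ℕ}

theorem nxt_val_of_lt {p : Fin n} (h : p.1 + 1 < n) : (nxt p).1 = p.1 + 1 :=
  Nat.mod_eq_of_lt h

theorem nxt_val_cases (p : Fin n) :
    (nxt p).1 = p.1 + 1 ∧ p.1 + 1 < n ∨ (nxt p).1 = 0 ∧ p.1 + 1 = n := by
  rcases Nat.lt_or_ge (p.1 + 1) n with h | h
  · exact Or.inl ⟨nxt_val_of_lt h, h⟩
  · have h' : p.1 + 1 = n := by omega
    exact Or.inr ⟨by simp [nxt, h'], h'⟩

theorem prv_val {p : Fin n} (h : 0 < p.1) : (prv p).1 = p.1 - 1 := by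
  have e : p.1 + (n - 1) = p.1 - 1 + n := by omega
  simp only [prv, e, Nat.add_mod_right]
  exact Nat.mod_eq_of_lt (by omega)

theorem prv_nxt (p : Fin n) : prv (nxt p) = p := by
  have e : p.1 + 1 + (n - 1) = p.1 + n := by omega
  ext
  simp only [prv, nxt, Nat.mod_add_mod, e, Nat.add_mod_right, Nat.mod_eq_of_lt p.2]

theorem nxt_prv (p : Fin n) : nxt (prv p) = p := by
  have e : p.1 + (n - 1) + 1 = p.1 + n := by omega
  ext
  simp only [prv, nxt, Nat.mod_add_mod, e, Nat.add_mod_right, Nat.mod_eq_of_lt p.2]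

theorem nxt_injective : Function.Injective (nxt : Fin n → Fin n) :=
  Function.LeftInverse.injective prv_nxt

theorem nxt_nxt_ne (hn : 2 < n) (p : Fin n) : nxt (nxt p) ≠ p := by
  intro h
  have h' := congrArg Fin.val h
  rcases nxt_val_cases p with ⟨hp, _⟩ | ⟨hp, _⟩ <;>
    rcases nxt_val_cases (nxt p) with ⟨hq, _⟩ | ⟨hq, _⟩ <;> omega

end Cyclic

def tourEdge {α : Type*} {n : ℕ} (x : Fin n → α) (p : Fin n) : Sym2 α :=
  s(x p, x (nxt p))

section TourEdge

variable {α : Type*} {n : ℕ} {x : Fin n → α}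

theorem tourEdges_eq_range (x : Fin n → Plane) : tourEdges x = Set.range (tourEdge x) := by
  ext e
  exact exists_congr fun _ => eq_comm

theorem mk_mem_range_tourEdge_iff (hx : Function.Injective x) {p q : Fin n} :
    s(x p, x q) ∈ Set.range (tourEdge x) ↔ q = nxt p ∨ p = nxt q := by
  simp only [Set.mem_range, tourEdge, Sym2.eq_iff, hx.eq_iff]
  constructor
  · rintro ⟨r, ⟨rfl, rfl⟩ | ⟨rfl, rfl⟩⟩
    · exact Or.inl rfl
    · exact Or.inr rfl
  · rintro (rfl | rfl)
    · exact ⟨p, Or.inl ⟨rfl, rfl⟩⟩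
    · exact ⟨q, Or.inr ⟨rfl, rfl⟩⟩

theorem tourEdge_injective (hx : Function.Injective x) (hn : 2 < n) :
    Function.Injective (tourEdge x) := by
  intro p q h
  rcases Sym2.eq_iff.mp h with ⟨h₁, -⟩ | ⟨h₁, h₂⟩
  · exact hx h₁
  · rw [hx.eq_iff] at h₁ h₂
    exact absurd (h₂ ▸ h₁).symm (nxt_nxt_ne hn p)

end TourEdge

section Inversion

variable {α : Type*} {n : ℕ} {i j p : Fin n} (x : Fin n → α)

theorem invop_apply_of_mem (hij : i ≤ j) (h₁ : i.1 ≤ p.1) (h₂ : p.1 ≤ j.1) :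
    invop i j x p = x ⟨i.1 + j.1 - p.1, by omega⟩ := by
  simp only [invop, min_eq_left hij, max_eq_right hij, dif_pos (And.intro h₁ h₂)]

theorem invop_apply_of_not_mem (hij : i ≤ j) (h : p.1 < i.1 ∨ j.1 < p.1) :
    invop i j x p = x p := by
  simp only [invop, min_eq_left hij, max_eq_right hij]
  exact dif_neg (by omega)

theorem tourEdge_invop_of_not_mem (hi : 0 < i.1) (hij : i < j) (h : p.1 + 1 < i.1 ∨ j.1 < p.1) :
    tourEdge (invop i j x) p = tourEdge x p := by
  have hnxt : (nxt p).1 < i.1 ∨ j.1 < (nxt p).1 := by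
    rcases nxt_val_cases p with ⟨hp, _⟩ | ⟨hp, _⟩ <;> omega
  rw [tourEdge, invop_apply_of_not_mem x hij.le (by omega),
    invop_apply_of_not_mem x hij.le hnxt, tourEdge]

theorem tourEdge_invop_of_mem (hij : i < j) (h₁ : i.1 ≤ p.1) (h₂ : p.1 < j.1) :
    tourEdge (invop i j x) p = tourEdge x ⟨i.1 + j.1 - 1 - p.1, by omega⟩ := by
  have hnxt : (nxt p).1 = p.1 + 1 := nxt_val_of_lt (by omega)
  have hnxt' :
      (nxt ⟨i.1 + j.1 - 1 - p.1, by omega⟩ : Fin n) = ⟨i.1 + j.1 - p.1, by omega⟩ :=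
    Fin.ext (by rw [nxt_val_of_lt (by simp only; omega)]; simp only; omega)
  rw [tourEdge, tourEdge, invop_apply_of_mem x hij.le h₁ h₂.le,
    invop_apply_of_mem x hij.le (by omega) (by omega), hnxt', Sym2.eq_swap]
  congr 3
  simp only [hnxt]
  omega

theorem tourEdge_invop_prv (hi : 0 < i.1) (hij : i < j) :
    tourEdge (invop i j x) (prv i) = s(x (prv i), x j) := by
  have hprv : (prv i).1 = i.1 - 1 := prv_val hi
  rw [tourEdge, nxt_prv, invop_apply_of_not_mem x hij.le (by omega),
    invop_apply_of_mem x hij.le le_rfl hij.le]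
  congr 2
  ext
  simp

theorem tourEdge_invop_right (hi : 0 < i.1) (hij : i < j) :
    tourEdge (invop i j x) j = s(x i, x (nxt j)) := by
  have hnxt : (nxt j).1 < i.1 ∨ j.1 < (nxt j).1 := by
    rcases nxt_val_cases j with ⟨hp, _⟩ | ⟨hp, _⟩ <;> omega
  rw [tourEdge, invop_apply_of_mem x hij.le hij.le le_rfl,
    invop_apply_of_not_mem x hij.le hnxt]
  congr 2
  ext
  simp

theorem range_tourEdge_invop (hi : 0 < i.1) (hij : i < j) :
    Set.range (tourEdge (invop i j x))
      = tourEdge x '' {prv i, j}ᶜ ∪ {s(x (prv i), x j), s(x i, x (nxt j))} := by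
  have hprv : (prv i).1 = i.1 - 1 := prv_val hi
  ext e
  simp only [Set.mem_range, Set.mem_union, Set.mem_image, Set.mem_compl_iff, Set.mem_insert_iff,
    Set.mem_singleton_iff, not_or, ← Fin.val_ne_iff, hprv]
  constructor
  · rintro ⟨p, rfl⟩
    rcases (by omega : p.1 + 1 < i.1 ∨ p.1 + 1 = i.1 ∨ i.1 ≤ p.1 ∧ p.1 < j.1 ∨
      p.1 = j.1 ∨ j.1 < p.1) with h | h | ⟨h₁, h₂⟩ | h | h
    · exact Or.inl ⟨p, by omega, (tourEdge_invop_of_not_mem x hi hij (Or.inl h)).symm⟩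
    · rw [show p = prv i from Fin.ext (by omega), tourEdge_invop_prv x hi hij]
      exact Or.inr (Or.inl rfl)
    · exact Or.inl ⟨_, by simp only; omega, (tourEdge_invop_of_mem x hij h₁ h₂).symm⟩
    · rw [show p = j from Fin.ext h, tourEdge_invop_right x hi hij]
      exact Or.inr (Or.inr rfl)
    · exact Or.inl ⟨p, by omega, (tourEdge_invop_of_not_mem x hi hij (Or.inr h)).symm⟩
  · rintro (⟨q, hq, rfl⟩ | rfl | rfl)
    · rcases (by omega : q.1 + 1 < i.1 ∨ i.1 ≤ q.1 ∧ q.1 < j.1 ∨ j.1 < q.1)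
        with h | ⟨h₁, h₂⟩ | h
      · exact ⟨q, tourEdge_invop_of_not_mem x hi hij (Or.inl h)⟩
      · refine ⟨⟨i.1 + j.1 - 1 - q.1, by omega⟩, ?_⟩
        rw [tourEdge_invop_of_mem x hij (by simp only; omega) (by simp only; omega)]
        congr 1
        exact Fin.ext (by simp only; omega)
      · exact ⟨q, tourEdge_invop_of_not_mem x hi hij (Or.inr h)⟩
    · exact ⟨prv i, tourEdge_invop_prv x hi hij⟩
    · exact ⟨j, tourEdge_invop_right x hi hij⟩

theorem disjoint_newEdges_range_tourEdge (hx : Function.Injective x) (hij : i < j)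
    (hji : nxt j ≠ prv i) :
    Disjoint ({s(x (prv i), x j), s(x i, x (nxt j))} : Set (Sym2 α)) (Set.range (tourEdge x)) := by
  rw [Set.disjoint_insert_left, Set.disjoint_singleton_left, mk_mem_range_tourEdge_iff hx,
    mk_mem_range_tourEdge_iff hx, nxt_prv]
  refine ⟨?_, ?_⟩
  · rintro (h | h)
    · exact hij.ne' h
    · exact hji h.symm
  · rintro (h | h)
    · exact hij.ne' (nxt_injective h)
    · exact hji (by rw [h, prv_nxt])

theorem range_tourEdge_diff_invop (hx : Function.Injective x) (hi : 0 < i.1) (hij : i < j)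
    (hji : nxt j ≠ prv i) :
    Set.range (tourEdge x) \ Set.range (tourEdge (invop i j x))
      = {s(x (prv i), x i), s(x j, x (nxt j))} := by
  have hn : 2 < n := by omega
  rw [range_tourEdge_invop x hi hij, ← Set.sdiff_sdiff, ← Set.image_univ,
    ← Set.image_sdiff (tourEdge_injective hx hn), Set.sdiff_compl, Set.univ_inter,
    ((disjoint_newEdges_range_tourEdge x hx hij hji).symm.mono_left
      (Set.image_subset_range _ _)).sdiff_eq_left, Set.image_pair, tourEdge, tourEdge, nxt_prv]

theorem range_tourEdge_invop_diff (hx : Function.Injective x) (hi : 0 < i.1) (hij : i < j)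
    (hji : nxt j ≠ prv i) :
    Set.range (tourEdge (invop i j x)) \ Set.range (tourEdge x)
      = {s(x (prv i), x j), s(x i, x (nxt j))} := by
  rw [range_tourEdge_invop x hi hij, Set.union_sdiff_distrib,
    Set.sdiff_eq_empty.mpr (Set.image_subset_range _ _), Set.empty_union,
    (disjoint_newEdges_range_tourEdge x hx hij hji).sdiff_eq_left]

end Inversion

theorem segsCross_comm {P Q R S : Plane} : segsCross P Q R S → segsCross R S P Q :=
  fun ⟨p, h₁, h₂⟩ => ⟨p, h₂, h₁⟩

theorem nxt_ne_of_segsCross {n : ℕ} {x : Fin n → Plane} (hx : Function.Injective x)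
    (hcol : noThreeCollinear (Set.range x)) {a b : Fin n} (hne : tourEdge x a ≠ tourEdge x b)
    (hcr : segsCross (x a) (x (nxt a)) (x b) (x (nxt b))) : nxt a ≠ b := by
  rintro rfl
  obtain ⟨p, h₁, h₂⟩ := hcr
  have ha : a ≠ nxt a := fun h => hne (congrArg (tourEdge x) h)
  refine hcol _ ⟨a, rfl⟩ _ ⟨nxt a, rfl⟩ _ ⟨nxt (nxt a), rfl⟩ (hx.ne ha) (fun h => ?_)
    (hx.ne (nxt_injective.ne ha)) (collinear_of_mem_openSegment_of_mem_openSegment h₁ h₂)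
  exact hne (by rw [tourEdge, tourEdge, ← h, Sym2.eq_swap])

/-- if the tour `C(x)` contains two intersecting edges, then there
are indices `i < j` such that the edges `{x_{i-1}, x_i}` and `{x_j, x_{j+1}}`
intersect, the inversion `y = inv_{i,j}[x]` removes exactly these two edges and
introduces exactly the edges `{x_{i-1}, x_j}` and `{x_i, x_{j+1}}`, and the two
newly introduced edges do not intersect each other. -/
theorem stmt2 (n : ℕ) (x : Fin n → Plane) (hinj : Function.Injective x)
    (hcol : noThreeCollinear (Set.range x))
    (hcross : ∃ a b : Fin n,
      s(x a, x (nxt a)) ≠ s(x b, x (nxt b)) ∧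
      segsCross (x a) (x (nxt a)) (x b) (x (nxt b))) :
    ∃ i j : Fin n, i < j ∧
      segsCross (x (prv i)) (x i) (x j) (x (nxt j)) ∧
      tourEdges x \ tourEdges (invop i j x)
        = {s(x (prv i), x i), s(x j, x (nxt j))} ∧
      tourEdges (invop i j x) \ tourEdges x
        = {s(x (prv i), x j), s(x i, x (nxt j))} ∧
      ¬ segsCross (x (prv i)) (x j) (x i) (x (nxt j)) := by
  obtain ⟨a, b, hne, hcr⟩ := hcross
  wlog hab : a < b generalizing a b
  · exact this b a hne.symm (segsCross_comm hcr)
      (lt_of_le_of_ne (not_lt.mp hab) fun h => hne (h ▸ rfl))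
  have hsucc : nxt a ≠ b := nxt_ne_of_segsCross hinj hcol hne hcr
  have hwrap : nxt b ≠ prv (nxt a) := by
    rw [prv_nxt]
    exact nxt_ne_of_segsCross hinj hcol hne.symm (segsCross_comm hcr)
  have ha : (nxt a).1 = a.1 + 1 := nxt_val_of_lt (by omega)
  have hi : 0 < (nxt a).1 := by omega
  have hij : nxt a < b := by
    have := Fin.val_ne_of_ne hsucc
    rw [Fin.lt_def] at hab ⊢
    omega
  refine ⟨nxt a, b, hij, by rwa [prv_nxt], ?_, ?_, ?_⟩
  · rw [tourEdges_eq_range, tourEdges_eq_range]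
    exact range_tourEdge_diff_invop x hinj hi hij hwrap
  · rw [tourEdges_eq_range, tourEdges_eq_range]
    exact range_tourEdge_invop_diff x hinj hi hij hwrap
  · rw [prv_nxt]
    rintro ⟨q, h₁, h₂⟩
    obtain ⟨p, h₃, h₄⟩ := hcr
    exact hcol _ ⟨a, rfl⟩ _ ⟨nxt a, rfl⟩ _ ⟨b, rfl⟩
      (hinj.ne (Fin.ne_of_val_ne (by omega))) (hinj.ne hab.ne) (hinj.ne hsucc)
      (collinear_of_opposite_sides_meet h₃ h₄ h₁ h₂)
end
end

section
/- Let n ≥ 3 and let x, y be permutations of [n] such that y can be obtained from x by applying some sequence of j ≥ 1 jump operations. Then the probability that mixed-mutation applied to x outputs exactly y is at least (1/(2e·(j−1)!))·(n−1)^{−2j}. In particular, if y can be reached from x by k jumps (k ≥ 1), this probability is at least 1/(2e·n^{2k}·(k−1)!). -/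
noncomputable section
open Real EuclideanGeometry MeasureTheory
open scoped Classical ENNReal

/-- The pairs `(i,j)` with `i < j`, indexing the `n(n-1)/2` distinct inversions. -/
def inversionPairsF (n : ℕ) : Finset (Fin n × Fin n) :=
  Finset.univ.filter (fun q => q.1 < q.2)

/-- The index pairs for the `(n-1)²` distinct jump operations (pairs `(i,j)` with
`i ≠ j`, where `jmp (j+1) j` is identified with `jmp j (j+1)`). -/
def jumpPairsF (n : ℕ) : Finset (Fin n × Fin n) :=
  Finset.univ.filter (fun q => q.1 ≠ q.2 ∧ q.1.1 ≠ q.2.1 + 1)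

/-- Probability (as a real number) that `m` independent uniformly random inversions
transform `x` into `y`. -/
def invWalkR {α : Type*} (n : ℕ) : ℕ → (Fin n → α) → (Fin n → α) → ℝ
  | 0, x, y => if x = y then 1 else 0
  | m + 1, x, y =>
      ((inversionPairsF n).card : ℝ)⁻¹ *
        ∑ q ∈ inversionPairsF n, invWalkR n m (invop q.1 q.2 x) y

/-- Probability that `m` independent uniformly random jumps transform `x` into `y`. -/
def jumpWalkR {α : Type*} (n : ℕ) : ℕ → (Fin n → α) → (Fin n → α) → ℝ
  | 0, x, y => if x = y then 1 else 0
  | m + 1, x, y =>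
      ((jumpPairsF n).card : ℝ)⁻¹ *
        ∑ q ∈ jumpPairsF n, jumpWalkR n m (jmp q.1 q.2 x) y

/-- Probability that `2-opt-mutation(x)` outputs `y`: draw `s` from a Poisson
distribution with parameter 1, then apply `s+1` uniformly random inversions. -/
def twoOptProbR {α : Type*} (n : ℕ) (x y : Fin n → α) : ℝ :=
  ∑' s : ℕ, (Real.exp (-1) / s.factorial) * invWalkR n (s + 1) x y

/-- Probability that `mixed-mutation(x)` outputs `y`: with probability 1/2 apply
`s+1` random inversions, with probability 1/2 apply `s+1` random jumps, where `s`
is Poisson with parameter 1. -/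
def mixedProbR {α : Type*} (n : ℕ) (x y : Fin n → α) : ℝ :=
  ∑' s : ℕ, (Real.exp (-1) / s.factorial) *
    ((1 / 2) * invWalkR n (s + 1) x y + (1 / 2) * jumpWalkR n (s + 1) x y)

/-- First hitting time (counted so that the initial state is at time 1) of the
set of states satisfying `opt`, with value `∞` if the set is never hit. -/
def hitTime {Ω S : Type*} (opt : S → Prop) (X : ℕ → Ω → S) (ω : Ω) : ℝ≥0∞ :=
  sInf {m : ℝ≥0∞ | ∃ t : ℕ, m = (t : ℝ≥0∞) + 1 ∧ opt (X t ω)}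

/-!
Keep only the jump branch of the mutation and the Poisson term `s = j - 1`: this has weight
`e⁻¹ / (2 (j - 1)!)` and then `j` uniform jumps must reproduce a given reachable sequence.
Identifying `jmp (i + 1) i` with `jmp i (i + 1)`, every jump is one of exactly `(n - 1)²`
equally likely choices, so a fixed sequence of `j` of them has probability `(n - 1)^(-2j)`.
-/

def uniformWalkProb {ι β : Type*} (S : Finset ι) (op : ι → β → β) : ℕ → β → β → ℝ
  | 0, x, y => if x = y then 1 else 0
  | m + 1, x, y => (S.card : ℝ)⁻¹ * ∑ q ∈ S, uniformWalkProb S op m (op q x) y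

section UniformWalk

variable {ι β : Type*} (S : Finset ι) (op : ι → β → β)

lemma uniformWalkProb_nonneg (m : ℕ) (x y : β) : 0 ≤ uniformWalkProb S op m x y := by
  induction m generalizing x with
  | zero => unfold uniformWalkProb; positivity
  | succ m ih => exact mul_nonneg (by positivity) (Finset.sum_nonneg fun q _ => ih _)

lemma uniformWalkProb_le_one (m : ℕ) (x y : β) : uniformWalkProb S op m x y ≤ 1 := by
  induction m generalizing x with
  | zero => unfold uniformWalkProb; split_ifs <;> norm_num
  | succ m ih =>
    calc uniformWalkProb S op (m + 1) x y
        ≤ (S.card : ℝ)⁻¹ * ∑ _q ∈ S, (1 : ℝ) := by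
          unfold uniformWalkProb
          gcongr with q
          exact ih _
      _ ≤ 1 := by
          rw [Finset.sum_const, nsmul_one]
          exact inv_mul_le_one_of_le₀ le_rfl (Nat.cast_nonneg _)

lemma inv_card_pow_le_uniformWalkProb_foldl (l : List ι) (hl : ∀ q ∈ l, q ∈ S) (x : β) :
    (S.card : ℝ)⁻¹ ^ l.length ≤
      uniformWalkProb S op l.length x (l.foldl (fun z q => op q z) x) := by
  induction l generalizing x with
  | nil => simp [uniformWalkProb]
  | cons q l ih =>
    have hq : q ∈ S := hl q List.mem_cons_self
    calc (S.card : ℝ)⁻¹ ^ (q :: l).length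
        = (S.card : ℝ)⁻¹ * (S.card : ℝ)⁻¹ ^ l.length := by
          rw [List.length_cons, pow_succ']
      _ ≤ (S.card : ℝ)⁻¹ * uniformWalkProb S op l.length (op q x)
            (l.foldl (fun z q => op q z) (op q x)) := by
          gcongr
          exact ih (fun r hr => hl r (List.mem_cons_of_mem q hr)) _
      _ ≤ uniformWalkProb S op (q :: l).length x ((q :: l).foldl (fun z q => op q z) x) := by
          rw [List.length_cons, List.foldl_cons, uniformWalkProb]
          gcongr
          exact Finset.single_le_sum (f := fun r => uniformWalkProb S op l.length (op r x) _)
            (fun r _ => uniformWalkProb_nonneg S op _ _ _) hq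

end UniformWalk

lemma invWalkR_eq_uniformWalkProb {α : Type*} (n m : ℕ) (x y : Fin n → α) :
    invWalkR n m x y = uniformWalkProb (inversionPairsF n) (fun q => invop q.1 q.2) m x y := by
  induction m generalizing x with
  | zero => simp [invWalkR, uniformWalkProb]
  | succ m ih => simp only [invWalkR, uniformWalkProb, ih]

lemma jumpWalkR_eq_uniformWalkProb {α : Type*} (n m : ℕ) (x y : Fin n → α) :
    jumpWalkR n m x y = uniformWalkProb (jumpPairsF n) (fun q => jmp q.1 q.2) m x y := by
  induction m generalizing x with
  | zero => simp [jumpWalkR, uniformWalkProb]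
  | succ m ih => simp only [jumpWalkR, uniformWalkProb, ih]

lemma card_filter_val_eq_val_add_one (m : ℕ) :
    (Finset.univ.filter fun q : Fin (m + 1) × Fin (m + 1) => q.1.1 = q.2.1 + 1).card = m := by
  conv_rhs => rw [← Finset.card_fin m]
  symm
  refine Finset.card_nbij (fun i => (i.succ, i.castSucc)) (by simp) ?_ ?_
  · intro a _ b _ h
    simpa using congrArg Prod.snd h
  · rintro ⟨a, b⟩ h
    simp only [Finset.coe_filter, Finset.mem_univ, true_and, Set.mem_ofPred_eq] at h
    refine ⟨⟨b.1, by omega⟩, by simp, ?_⟩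
    ext <;> simp [h]

lemma card_jumpPairsF (n : ℕ) : (jumpPairsF n).card = (n - 1) ^ 2 := by
  obtain _ | m := n
  · rfl
  have hsplit := Finset.card_filter_add_card_filter_not
    (s := (Finset.univ : Finset (Fin (m + 1))).offDiag) fun q => q.1.1 = q.2.1 + 1
  have hsub : (Finset.univ : Finset (Fin (m + 1))).offDiag.filter (fun q => q.1.1 = q.2.1 + 1) =
      Finset.univ.filter fun q : Fin (m + 1) × Fin (m + 1) => q.1.1 = q.2.1 + 1 := by
    ext ⟨a, b⟩
    simp only [Finset.mem_filter, Finset.mem_offDiag, Finset.mem_univ, true_and,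
      and_iff_right_iff_imp]
    rintro h rfl
    omega
  have hjump : (Finset.univ : Finset (Fin (m + 1))).offDiag.filter (fun q => ¬q.1.1 = q.2.1 + 1) =
      jumpPairsF (m + 1) := by
    ext q
    simp [jumpPairsF]
  rw [hsub, hjump, card_filter_val_eq_val_add_one, Finset.offDiag_card, Finset.card_univ,
    Fintype.card_fin, ← Nat.mul_sub_one, Nat.add_sub_cancel] at hsplit
  rw [Nat.add_sub_cancel]
  linarith

lemma jmp_comm_of_val_eq_val_add_one {α : Type*} {n : ℕ} (i j : Fin n) (h : i.1 = j.1 + 1) :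
    jmp (α := α) i j = jmp j i := by
  funext x p
  simp only [jmp, Fin.le_def, Fin.lt_def, Fin.ext_iff]
  split_ifs <;> first | rfl | omega | (congr 1; ext; simp only; omega)

-- `jumpPairsF` keeps only one of the equal operations `jmp (j + 1) j` and `jmp j (j + 1)`.
def jumpPairRep {n : ℕ} (q : Fin n × Fin n) : Fin n × Fin n :=
  if q.1.1 = q.2.1 + 1 then q.swap else q

lemma jmp_jumpPairRep {α : Type*} {n : ℕ} (q : Fin n × Fin n) :
    jmp (α := α) (jumpPairRep q).1 (jumpPairRep q).2 = jmp q.1 q.2 := by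
  unfold jumpPairRep
  split_ifs with h
  · exact (jmp_comm_of_val_eq_val_add_one q.1 q.2 h).symm
  · rfl

lemma jumpPairRep_mem_jumpPairsF {n : ℕ} (q : Fin n × Fin n) (hq : q.1 ≠ q.2) :
    jumpPairRep q ∈ jumpPairsF n := by
  unfold jumpPairRep
  split_ifs with h <;> simp [jumpPairsF, hq, Ne.symm hq] <;> omega

lemma inv_pow_le_jumpWalkR_foldl {α : Type*} {n : ℕ} (hn : 1 ≤ n) (l : List (Fin n × Fin n))
    (hl : ∀ q ∈ l, q.1 ≠ q.2) (x : Fin n → α) :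
    (((n : ℝ) - 1) ^ (2 * l.length))⁻¹ ≤
      jumpWalkR n l.length x (l.foldl (fun z q => jmp q.1 q.2 z) x) := by
  have hcard : ((jumpPairsF n).card : ℝ) = ((n : ℝ) - 1) ^ 2 := by
    rw [card_jumpPairsF]
    push_cast [Nat.cast_sub hn]
    rfl
  have hrep : ∀ q ∈ l.map jumpPairRep, q ∈ jumpPairsF n := by
    intro q hq
    obtain ⟨p, hp, rfl⟩ := List.mem_map.1 hq
    exact jumpPairRep_mem_jumpPairsF p (hl p hp)
  have := inv_card_pow_le_uniformWalkProb_foldl (jumpPairsF n) (fun q => jmp q.1 q.2) _ hrep x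
  simp_rw [List.length_map, hcard, List.foldl_map, jmp_jumpPairRep, inv_pow, ← pow_mul,
    ← jumpWalkR_eq_uniformWalkProb] at this
  exact this

lemma half_invWalkR_add_half_jumpWalkR_mem_Icc {α : Type*} (n m : ℕ) (x y : Fin n → α) :
    (1 / 2) * invWalkR n m x y + (1 / 2) * jumpWalkR n m x y ∈ Set.Icc (0 : ℝ) 1 := by
  rw [invWalkR_eq_uniformWalkProb, jumpWalkR_eq_uniformWalkProb]
  have := uniformWalkProb_nonneg (inversionPairsF n) (fun q => invop q.1 q.2) m x y
  have := uniformWalkProb_nonneg (jumpPairsF n) (fun q => jmp q.1 q.2) m x y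
  have := uniformWalkProb_le_one (inversionPairsF n) (fun q => invop q.1 q.2) m x y
  have := uniformWalkProb_le_one (jumpPairsF n) (fun q => jmp q.1 q.2) m x y
  constructor <;> linarith

lemma summable_mixedProbR_summand {α : Type*} (n : ℕ) (x y : Fin n → α) :
    Summable fun s : ℕ => (Real.exp (-1) / s.factorial) *
      ((1 / 2) * invWalkR n (s + 1) x y + (1 / 2) * jumpWalkR n (s + 1) x y) := by
  have hp := fun s => half_invWalkR_add_half_jumpWalkR_mem_Icc n (s + 1) x y
  refine .of_nonneg_of_le (f := fun s : ℕ => Real.exp (-1) / s.factorial)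
    (fun s => mul_nonneg (by positivity) (hp s).1)
    (fun s => mul_le_of_le_one_right (by positivity) (hp s).2)
    (((Real.summable_pow_div_factorial 1).mul_left (Real.exp (-1))).congr fun s => ?_)
  simp [div_eq_mul_inv]

lemma div_factorial_mul_jumpWalkR_le_mixedProbR {α : Type*} (n s : ℕ) (x y : Fin n → α) :
    Real.exp (-1) / s.factorial * ((1 / 2) * jumpWalkR n (s + 1) x y) ≤ mixedProbR n x y := by
  have hinv : 0 ≤ invWalkR n (s + 1) x y := by
    rw [invWalkR_eq_uniformWalkProb]
    exact uniformWalkProb_nonneg _ _ _ _ _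
  calc Real.exp (-1) / s.factorial * ((1 / 2) * jumpWalkR n (s + 1) x y)
      ≤ Real.exp (-1) / s.factorial *
          ((1 / 2) * invWalkR n (s + 1) x y + (1 / 2) * jumpWalkR n (s + 1) x y) := by
        gcongr
        linarith
    _ ≤ mixedProbR n x y :=
        (summable_mixedProbR_summand n x y).le_tsum s fun t _ =>
          mul_nonneg (by positivity) (half_invWalkR_add_half_jumpWalkR_mem_Icc n (t + 1) x y).1

theorem stmt16_general (n : ℕ) (hn : 3 ≤ n) (x y : Fin n → Fin n)
    (j : ℕ) (hj : 1 ≤ j)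
    (hreach : ∃ l : List (Fin n × Fin n), l.length = j ∧ (∀ q ∈ l, q.1 ≠ q.2) ∧
      l.foldl (fun z q => jmp q.1 q.2 z) x = y) :
    (1 / (2 * Real.exp 1 * (j - 1).factorial)) * (((n : ℝ) - 1) ^ (2 * j))⁻¹
        ≤ mixedProbR n x y ∧
    (∀ k : ℕ, 1 ≤ k → j = k →
      1 / (2 * Real.exp 1 * (n : ℝ) ^ (2 * k) * (k - 1).factorial)
        ≤ mixedProbR n x y) := by
  obtain ⟨s, rfl⟩ : ∃ s, j = s + 1 := ⟨j - 1, by omega⟩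
  rw [Nat.add_sub_cancel]
  obtain ⟨l, hlen, hl, hy⟩ := hreach
  have hjump : (((n : ℝ) - 1) ^ (2 * (s + 1)))⁻¹ ≤ jumpWalkR n (s + 1) x y :=
    hlen ▸ hy ▸ inv_pow_le_jumpWalkR_foldl (by omega) l hl x
  have hmain : 1 / (2 * Real.exp 1 * s.factorial) * (((n : ℝ) - 1) ^ (2 * (s + 1)))⁻¹ ≤
      mixedProbR n x y :=
    calc 1 / (2 * Real.exp 1 * s.factorial) * (((n : ℝ) - 1) ^ (2 * (s + 1)))⁻¹
        = Real.exp (-1) / s.factorial * ((1 / 2) * (((n : ℝ) - 1) ^ (2 * (s + 1)))⁻¹) := by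
          rw [Real.exp_neg]
          ring
      _ ≤ Real.exp (-1) / s.factorial * ((1 / 2) * jumpWalkR n (s + 1) x y) := by gcongr
      _ ≤ mixedProbR n x y := div_factorial_mul_jumpWalkR_le_mixedProbR n s x y
  refine ⟨hmain, ?_⟩
  rintro k - rfl
  refine hmain.trans' ?_
  have hn1 : (0 : ℝ) < n - 1 := by
    rw [sub_pos]
    exact_mod_cast (by omega : 1 < n)
  rw [Nat.add_sub_cancel, one_div, one_div, ← mul_inv, mul_right_comm]
  gcongr
  linarith

/-- if `y` is reachable from `x` by `j ≥ 1` jump operations, then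
`mixed-mutation(x)` outputs `y` with probability at least
`(1/(2e·(j-1)!))·(n-1)^{-2j}`; in particular at least `1/(2e·n^{2k}·(k-1)!)`
if `y` is reachable by `k` jumps. -/
theorem stmt16 (n : ℕ) (hn : 3 ≤ n) (x y : Fin n → Fin n)
    (hx : Function.Bijective x) (j : ℕ) (hj : 1 ≤ j)
    (hreach : ∃ l : List (Fin n × Fin n), l.length = j ∧ (∀ q ∈ l, q.1 ≠ q.2) ∧
      l.foldl (fun z q => jmp q.1 q.2 z) x = y) :
    (1 / (2 * Real.exp 1 * (j - 1).factorial)) * (((n : ℝ) - 1) ^ (2 * j))⁻¹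
        ≤ mixedProbR n x y ∧
    (∀ k : ℕ, 1 ≤ k → j = k →
      1 / (2 * Real.exp 1 * (n : ℝ) ^ (2 * k) * (k - 1).factorial)
        ≤ mixedProbR n x y) :=
  stmt16_general n hn x y j hj hreach

end
end
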